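/- Let d ∈ ℕ and 0 < α < d. There exists a constant c₄ > 0, depending only on α and d, such that for every θ ∈ [0,1] and all Lebesgue-measurable sets A, B ⊆ ℝ^d of finite measure, ‖I_α^θ(χ_A, χ_B)‖_{L^{d/α, ∞}(ℝ^d)} ≤ c₄ |A|^{α/d} |B|^{α/d}. -/

import Mathlib

open MeasureTheory ENNReal

/-- The bilinear fractional integral operator
`I_α^θ(f,g)(x) = ∫_{ℝ^d} f(x + (θ−1)y) g(x + θy) |y|^{α−d} dy`. -/
noncomputable def Iop (d : ℕ) (α θ : ℝ)
    (f g : EuclideanSpace ℝ (Fin d) → ℝ≥0∞) (x : EuclideanSpace ℝ (Fin d)) : ℝ≥0∞ :=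
  ∫⁻ y : EuclideanSpace ℝ (Fin d),
    f (x + (θ - 1) • y) * g (x + θ • y) * ENNReal.ofReal (‖y‖ ^ (α - (d : ℝ)))

/-- The weak `L^r` quasi-norm `sup_{λ > 0} λ · |{x : h x > λ}|^{1/r}`. -/
noncomputable def wLp (d : ℕ) (r : ℝ)
    (h : EuclideanSpace ℝ (Fin d) → ℝ≥0∞) : ℝ≥0∞ :=
  ⨆ (lam : ℝ) (_ : 0 < lam),
    ENNReal.ofReal lam * (volume {x | ENNReal.ofReal lam < h x}) ^ (1 / r)

/-! For `θ ≥ 1/2` the substitution `z = x + θ y` bounds `I_α^θ(χ_A, χ_B)(x)` by the kernel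
integral `∫_S |y|^{α-d} dy` over a set `S` with `|S| = θ^{-d} |B| ≤ 2^d |B|`; comparing `S` with
the ball of radius `|S|^{1/d}` and using the homogeneity of the kernel gives the pointwise bound
`I ≤ C |B|^{α/d}`. Fubini and the translation `u = x + (θ - 1) y` give `∫ I ≤ C |A| |B|^{α/d}`.
With `s = α/d`, Markov's inequality interpolates the two:
`λ |{I > λ}|^s = λ^{1-s} (λ |{I > λ}|)^s ≤ C |A|^s |B|^s`. The reflection `y ↦ -y` turns
`I_α^θ(f, g)` into `I_α^{1-θ}(g, f)`, reducing `θ < 1/2` to `θ ≥ 1/2`. -/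

open Metric Set Module

section RieszKernel

variable {E : Type*} [NormedAddCommGroup E] [NormedSpace ℝ E] [FiniteDimensional ℝ E]
  [MeasurableSpace E] [BorelSpace E] (μ : Measure E) [μ.IsAddHaarMeasure] {α : ℝ}

noncomputable def rieszKernel (α : ℝ) (y : E) : ℝ≥0∞ :=
  ENNReal.ofReal (‖y‖ ^ (α - finrank ℝ E))

omit [FiniteDimensional ℝ E] in
@[fun_prop]
lemma measurable_rieszKernel : Measurable (rieszKernel (E := E) α) := by
  unfold rieszKernel; fun_prop

omit [MeasurableSpace E] [BorelSpace E] [FiniteDimensional ℝ E] in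
lemma rieszKernel_smul {r : ℝ} (hr : 0 < r) (y : E) :
    rieszKernel α (r • y) = ENNReal.ofReal (r ^ (α - finrank ℝ E)) * rieszKernel α y := by
  rw [rieszKernel, rieszKernel, norm_smul, Real.norm_of_nonneg hr.le,
    Real.mul_rpow hr.le (norm_nonneg y), ENNReal.ofReal_mul (by positivity)]

lemma setLIntegral_ball_rieszKernel {r : ℝ} (hr : 0 < r) :
    ∫⁻ y in ball 0 r, rieszKernel α y ∂μ
      = ENNReal.ofReal (r ^ α) * ∫⁻ y in ball 0 1, rieszKernel α y ∂μ := by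
  have hpre : (fun z : E => r • z) ⁻¹' ball 0 r = ball 0 1 := by
    ext z
    simp [norm_smul, abs_of_pos hr, hr]
  have hscale : ENNReal.ofReal (r ^ finrank ℝ E)⁻¹ * ∫⁻ y in ball 0 r, rieszKernel α y ∂μ
      = ENNReal.ofReal (r ^ (α - finrank ℝ E)) * ∫⁻ y in ball 0 1, rieszKernel α y ∂μ := by
    have h := setLIntegral_map (μ := μ) (measurableSet_ball (x := 0) (ε := r))
      (measurable_rieszKernel (α := α)) (measurable_const_smul r)
    rw [Measure.map_addHaar_smul μ hr.ne', Measure.restrict_smul, lintegral_smul_measure, hpre,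
      abs_of_pos (by positivity), smul_eq_mul] at h
    simpa only [rieszKernel_smul hr, lintegral_const_mul' _ _ ofReal_ne_top] using h
  have hrn : ENNReal.ofReal (r ^ finrank ℝ E) * ENNReal.ofReal (r ^ finrank ℝ E)⁻¹ = 1 := by
    rw [← ENNReal.ofReal_mul (by positivity), mul_inv_cancel₀ (by positivity), ofReal_one]
  calc ∫⁻ y in ball 0 r, rieszKernel α y ∂μ
      = ENNReal.ofReal (r ^ finrank ℝ E) * (ENNReal.ofReal (r ^ finrank ℝ E)⁻¹ *
          ∫⁻ y in ball 0 r, rieszKernel α y ∂μ) := by rw [← mul_assoc, hrn, one_mul]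
    _ = ENNReal.ofReal (r ^ α) * ∫⁻ y in ball 0 1, rieszKernel α y ∂μ := by
      rw [hscale, ← mul_assoc, ← ENNReal.ofReal_mul (by positivity), ← Real.rpow_natCast,
        ← Real.rpow_add hr, add_sub_cancel]

lemma setLIntegral_unitBall_rieszKernel_lt_top (hα : 0 < α) (hαE : α < finrank ℝ E) :
    ∫⁻ y in ball 0 1, rieszKernel α y ∂μ < ∞ := by
  have hdim : 1 ≤ finrank ℝ E := Nat.cast_pos.mp (hα.trans hαE)
  refine IntegrableOn.setLIntegral_lt_top (integrableOn_ball_of_norm_le_rpow (C := 1) hdim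
    (α := finrank ℝ E - α) (by linarith) (ae_of_all _ fun y => ?_)
    (by fun_prop : Measurable fun y : E => ‖y‖ ^ (α - finrank ℝ E)).aestronglyMeasurable)
  rw [Real.norm_of_nonneg (by positivity), one_mul, neg_sub]

noncomputable def rieszConst (μ : Measure E) (α : ℝ) : ℝ≥0∞ :=
  ∫⁻ y in ball 0 1, rieszKernel α y ∂μ + 1

lemma rieszConst_ne_top (hα : 0 < α) (hαE : α < finrank ℝ E) : rieszConst μ α ≠ ∞ :=
  add_ne_top.mpr ⟨(setLIntegral_unitBall_rieszKernel_lt_top μ hα hαE).ne, one_ne_top⟩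

lemma setLIntegral_rieszKernel_le (hα : 0 < α) (hαE : α < finrank ℝ E) {S : Set E}
    (hS : μ S ≠ ∞) :
    ∫⁻ y in S, rieszKernel α y ∂μ ≤ rieszConst μ α * μ S ^ (α / finrank ℝ E) := by
  rcases eq_or_ne (μ S) 0 with h0 | h0
  · rw [setLIntegral_measure_zero _ _ h0]
    exact zero_le
  have hn : (0 : ℝ) < finrank ℝ E := hα.trans hαE
  have hV : 0 < (μ S).toReal := toReal_pos h0 hS
  set r := (μ S).toReal ^ (1 / (finrank ℝ E : ℝ))
  have hr : 0 < r := by positivity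
  have hrα : ENNReal.ofReal (r ^ α) = μ S ^ (α / finrank ℝ E) := by
    rw [← Real.rpow_mul hV.le, ← ofReal_rpow_of_pos hV, ofReal_toReal hS]
    congr 1
    field_simp
  have hrαn : ENNReal.ofReal (r ^ (α - finrank ℝ E)) * μ S = μ S ^ (α / finrank ℝ E) := by
    rw [← Real.rpow_mul hV.le, ← ofReal_rpow_of_pos hV, ofReal_toReal hS]
    nth_rewrite 2 [← ENNReal.rpow_one (μ S)]
    rw [← ENNReal.rpow_add _ _ h0 hS]
    congr 1
    field_simp
    ring
  have hfar : ∀ y ∈ S \ ball 0 r, rieszKernel α y ≤ ENNReal.ofReal (r ^ (α - finrank ℝ E)) :=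
    fun y hy => ofReal_le_ofReal
      (Real.rpow_le_rpow_of_nonpos hr (by simpa using hy.2) (by linarith))
  calc ∫⁻ y in S, rieszKernel α y ∂μ
      = ∫⁻ y in S ∩ ball 0 r, rieszKernel α y ∂μ + ∫⁻ y in S \ ball 0 r, rieszKernel α y ∂μ :=
        (lintegral_inter_add_sdiff _ _ measurableSet_ball).symm
    _ ≤ ∫⁻ y in ball 0 r, rieszKernel α y ∂μ
          + ∫⁻ _ in S \ ball 0 r, ENNReal.ofReal (r ^ (α - finrank ℝ E)) ∂μ :=
        add_le_add (lintegral_mono_set inter_subset_right) (setLIntegral_mono measurable_const hfar)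
    _ ≤ ENNReal.ofReal (r ^ α) * ∫⁻ y in ball 0 1, rieszKernel α y ∂μ
          + ENNReal.ofReal (r ^ (α - finrank ℝ E)) * μ S := by
        rw [setLIntegral_ball_rieszKernel μ hr, setLIntegral_const]
        gcongr
        exact sdiff_subset
    _ = rieszConst μ α * μ S ^ (α / finrank ℝ E) := by
        rw [hrα, hrαn, rieszConst]
        ring

lemma lintegral_indicator_comp_mul_rieszKernel_le (hα : 0 < α) (hαE : α < finrank ℝ E)
    {Q : Set E} (hQ : MeasurableSet Q) (hQfin : μ Q ≠ ∞) (x : E) {c : ℝ} (hc : c ≠ 0) :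
    ∫⁻ y, Q.indicator 1 (x + c • y) * rieszKernel α y ∂μ
      ≤ rieszConst μ α * (ENNReal.ofReal |(c ^ finrank ℝ E)⁻¹| * μ Q) ^ (α / finrank ℝ E) := by
  have hpre : μ ((fun y => x + c • y) ⁻¹' Q) = ENNReal.ofReal |(c ^ finrank ℝ E)⁻¹| * μ Q := by
    rw [show (fun y => x + c • y) ⁻¹' Q = (c • ·) ⁻¹' ((x + ·) ⁻¹' Q) from rfl,
      Measure.addHaar_preimage_smul μ hc, measure_preimage_add]
  calc ∫⁻ y, Q.indicator 1 (x + c • y) * rieszKernel α y ∂μ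
      = ∫⁻ y, ((fun y => x + c • y) ⁻¹' Q).indicator (rieszKernel α) y ∂μ := by
        congr with y
        by_cases hy : x + c • y ∈ Q <;> simp [hy]
    _ = ∫⁻ y in (fun y => x + c • y) ⁻¹' Q, rieszKernel α y ∂μ :=
        lintegral_indicator (hQ.preimage (by fun_prop)) _
    _ ≤ _ := by
        rw [← hpre]
        exact setLIntegral_rieszKernel_le μ hα hαE (hpre ▸ mul_ne_top ofReal_ne_top hQfin)

end RieszKernel

section WeakType

variable {X : Type*} [MeasurableSpace X] {ν : Measure X}

lemma mul_measure_lt_rpow_le {f : X → ℝ≥0∞} (hf : AEMeasurable f ν) {M N : ℝ≥0∞} {s : ℝ}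
    (hs0 : 0 < s) (hs1 : s ≤ 1) (hM : ∀ x, f x ≤ M) (hN : ∫⁻ x, f x ∂ν ≤ N) (t : ℝ≥0∞) :
    t * ν {x | t < f x} ^ s ≤ M ^ (1 - s) * N ^ s := by
  rcases lt_or_ge M t with hMt | htM
  · have hempty : {x | t < f x} = ∅ :=
      eq_empty_of_forall_notMem fun x hx => (hM x).not_gt (hMt.trans hx)
    rw [hempty, measure_empty, zero_rpow_of_pos hs0, mul_zero]
    exact zero_le
  have hmarkov : t * ν {x | t < f x} ≤ N :=
    (mul_le_mul' le_rfl (measure_mono (ofPred_subset_ofPred.mpr fun _ => le_of_lt))).trans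
      ((mul_meas_ge_le_lintegral₀ hf t).trans hN)
  calc t * ν {x | t < f x} ^ s = t ^ (1 - s) * (t * ν {x | t < f x}) ^ s := by
        rw [mul_rpow_of_nonneg _ _ hs0.le, ← mul_assoc,
          ← rpow_add_of_nonneg _ _ (by linarith) hs0.le, sub_add_cancel, rpow_one]
    _ ≤ M ^ (1 - s) * N ^ s :=
        mul_le_mul' (rpow_le_rpow htM (by linarith)) (rpow_le_rpow hmarkov hs0.le)

end WeakType

lemma ENNReal.rpow_one_sub_mul_rpow_self (x : ℝ≥0∞) {s : ℝ} (hs0 : 0 ≤ s) (hs1 : s ≤ 1) :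
    x ^ (1 - s) * x ^ s = x := by
  rw [← rpow_add_of_nonneg _ _ (by linarith) hs0, sub_add_cancel, rpow_one]

lemma ENNReal.rpow_one_sub_mul_rpow_eq (C P Q : ℝ≥0∞) {s : ℝ} (hs0 : 0 ≤ s) (hs1 : s ≤ 1) :
    (C * Q ^ s) ^ (1 - s) * (C * P * Q ^ s) ^ s = C * P ^ s * Q ^ s := by
  rw [mul_rpow_of_nonneg _ _ (by linarith), mul_rpow_of_nonneg _ _ hs0,
    mul_rpow_of_nonneg _ _ hs0]
  calc C ^ (1 - s) * (Q ^ s) ^ (1 - s) * (C ^ s * P ^ s * (Q ^ s) ^ s)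
      = (C ^ (1 - s) * C ^ s) * P ^ s * ((Q ^ s) ^ (1 - s) * (Q ^ s) ^ s) := by ring
    _ = C * P ^ s * Q ^ s := by
      rw [rpow_one_sub_mul_rpow_self C hs0 hs1, rpow_one_sub_mul_rpow_self _ hs0 hs1]

section BilinearFractionalIntegral

variable {d : ℕ} {α : ℝ}

local notation "ℝᵈ" => EuclideanSpace ℝ (Fin d)

lemma rieszKernel_euclideanSpace (y : ℝᵈ) :
    rieszKernel α y = ENNReal.ofReal (‖y‖ ^ (α - d)) := by
  rw [rieszKernel, finrank_euclideanSpace_fin]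

lemma Iop_eq_lintegral_rieszKernel (θ : ℝ) (f g : ℝᵈ → ℝ≥0∞) (x : ℝᵈ) :
    Iop d α θ f g x = ∫⁻ y, f (x + (θ - 1) • y) * g (x + θ • y) * rieszKernel α y := by
  simp only [Iop, rieszKernel_euclideanSpace]

lemma Iop_comm (θ : ℝ) (f g : ℝᵈ → ℝ≥0∞) :
    Iop d α θ f g = Iop d α (1 - θ) g f := by
  ext x
  rw [Iop, ← lintegral_neg_eq_self, Iop]
  congr with y
  simp only [smul_neg, norm_neg, ← neg_smul, neg_sub, sub_sub_cancel_left]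
  ring

lemma measurable_Iop (θ : ℝ) {f g : ℝᵈ → ℝ≥0∞} (hf : Measurable f) (hg : Measurable g) :
    Measurable (Iop d α θ f g) := by
  simp only [funext (Iop_eq_lintegral_rieszKernel θ f g)]
  exact Measurable.lintegral_prod_right'
    (f := fun p : ℝᵈ × ℝᵈ => f (p.1 + (θ - 1) • p.2) * g (p.1 + θ • p.2) * rieszKernel α p.2)
    (by fun_prop)

lemma Iop_le_of_le_one (hα : 0 < α) (hαd : α < d) {θ : ℝ} (hθ : θ ≠ 0)
    {f : ℝᵈ → ℝ≥0∞} (hf : ∀ z, f z ≤ 1) {B : Set ℝᵈ} (hB : MeasurableSet B)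
    (hBfin : volume B ≠ ∞) (x : ℝᵈ) :
    Iop d α θ f (B.indicator 1) x
      ≤ rieszConst (volume : Measure ℝᵈ) α * (ENNReal.ofReal |(θ ^ d)⁻¹| * volume B) ^ (α / d) := by
  have h := lintegral_indicator_comp_mul_rieszKernel_le volume hα
    (by rwa [finrank_euclideanSpace_fin]) hB hBfin x hθ
  rw [finrank_euclideanSpace_fin] at h
  rw [Iop_eq_lintegral_rieszKernel]
  refine le_trans (lintegral_mono fun y => ?_) h
  calc f (x + (θ - 1) • y) * B.indicator 1 (x + θ • y) * rieszKernel α y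
      ≤ 1 * B.indicator 1 (x + θ • y) * rieszKernel α y := by gcongr; exact hf _
    _ = B.indicator 1 (x + θ • y) * rieszKernel α y := by rw [one_mul]

lemma lintegral_Iop_indicator_le (hα : 0 < α) (hαd : α < d) (θ : ℝ)
    {A B : Set ℝᵈ} (hA : MeasurableSet A) (hB : MeasurableSet B) (hBfin : volume B ≠ ∞) :
    ∫⁻ x, Iop d α θ (A.indicator 1) (B.indicator 1) x
      ≤ rieszConst (volume : Measure ℝᵈ) α * volume A * volume B ^ (α / d) := by
  have hχA : Measurable (A.indicator (1 : ℝᵈ → ℝ≥0∞)) := measurable_one.indicator hA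
  have hχB : Measurable (B.indicator (1 : ℝᵈ → ℝ≥0∞)) := measurable_one.indicator hB
  have hinner : ∀ u, ∫⁻ y, B.indicator 1 (u + y) * rieszKernel α y
      ≤ rieszConst (volume : Measure ℝᵈ) α * volume B ^ (α / d) := fun u => by
    simpa [finrank_euclideanSpace_fin] using lintegral_indicator_comp_mul_rieszKernel_le volume
      hα (by rwa [finrank_euclideanSpace_fin]) hB hBfin u one_ne_zero
  calc ∫⁻ x, Iop d α θ (A.indicator 1) (B.indicator 1) x
      = ∫⁻ y, ∫⁻ x, A.indicator 1 (x + (θ - 1) • y) * B.indicator 1 (x + θ • y)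
          * rieszKernel α y := by
        simp only [Iop_eq_lintegral_rieszKernel]
        exact lintegral_lintegral_swap (by fun_prop)
    _ = ∫⁻ y, ∫⁻ u, A.indicator 1 u * (B.indicator 1 (u + y) * rieszKernel α y) := by
        congr with y
        conv_rhs => rw [← lintegral_add_right_eq_self _ ((θ - 1) • y)]
        congr with x
        rw [show x + (θ - 1) • y + y = x + θ • y by module, mul_assoc]
    _ = ∫⁻ u, A.indicator 1 u * ∫⁻ y, B.indicator 1 (u + y) * rieszKernel α y := by
        rw [lintegral_lintegral_swap (by fun_prop)]
        congr with u
        exact lintegral_const_mul _ (by fun_prop)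
    _ ≤ ∫⁻ u, A.indicator 1 u * (rieszConst (volume : Measure ℝᵈ) α * volume B ^ (α / d)) := by
        gcongr with u
        exact hinner u
    _ = rieszConst (volume : Measure ℝᵈ) α * volume A * volume B ^ (α / d) := by
        rw [lintegral_mul_const _ hχA, lintegral_indicator_one hA]
        ring

lemma wLp_Iop_indicator_le_of_half_le (hα : 0 < α) (hαd : α < d) {θ : ℝ} (hθ : 1 / 2 ≤ θ)
    {A B : Set ℝᵈ} (hA : MeasurableSet A) (hB : MeasurableSet B) (hBfin : volume B ≠ ∞) :
    wLp d (d / α) (Iop d α θ (A.indicator 1) (B.indicator 1))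
      ≤ rieszConst (volume : Measure ℝᵈ) α * (2 ^ d) ^ (α / d)
          * volume A ^ (α / d) * volume B ^ (α / d) := by
  have hd : (0 : ℝ) < d := hα.trans hαd
  have hs0 : 0 < α / d := div_pos hα hd
  have hs1 : α / d ≤ 1 := (div_le_one hd).mpr hαd.le
  set C := rieszConst (volume : Measure ℝᵈ) α
  set I := Iop d α θ (A.indicator 1) (B.indicator 1)
  have hdil : ENNReal.ofReal |(θ ^ d)⁻¹| * volume B ≤ 2 ^ d * volume B := by
    gcongr
    rw [abs_of_pos (by positivity), ← ofReal_ofNat, ← ofReal_pow zero_le_two]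
    refine ofReal_le_ofReal ?_
    rw [← inv_pow]
    exact pow_le_pow_left₀ (by positivity) (inv_le_of_inv_le₀ two_pos (by rwa [← one_div])) d
  have hsup : ∀ x, I x ≤ C * (2 ^ d * volume B) ^ (α / d) := fun x =>
    (Iop_le_of_le_one hα hαd (by positivity) (indicator_le fun _ _ => le_rfl) hB hBfin x).trans
      (by gcongr)
  have hint : ∫⁻ x, I x ≤ C * volume A * (2 ^ d * volume B) ^ (α / d) :=
    (lintegral_Iop_indicator_le hα hαd θ hA hB hBfin).trans
      (by gcongr; exact le_mul_of_one_le_left' (one_le_pow₀ one_le_two))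
  have hI : Measurable I :=
    measurable_Iop θ (measurable_one.indicator hA) (measurable_one.indicator hB)
  rw [wLp, one_div_div]
  refine iSup₂_le fun t _ => ?_
  calc ENNReal.ofReal t * volume {x | ENNReal.ofReal t < I x} ^ (α / d)
      ≤ (C * (2 ^ d * volume B) ^ (α / d)) ^ (1 - α / d)
          * (C * volume A * (2 ^ d * volume B) ^ (α / d)) ^ (α / d) :=
        mul_measure_lt_rpow_le hI.aemeasurable hs0 hs1 hsup hint _
    _ = C * (2 ^ d) ^ (α / d) * volume A ^ (α / d) * volume B ^ (α / d) := by
        rw [rpow_one_sub_mul_rpow_eq _ _ _ hs0.le hs1, mul_rpow_of_nonneg _ _ hs0.le]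
        ring

end BilinearFractionalIntegral

theorem stmt11 (d : ℕ) (α : ℝ) (hα0 : 0 < α) (hαd : α < d) :
    ∃ c₄ : ℝ, 0 < c₄ ∧
      ∀ θ : ℝ, θ ∈ Set.Icc (0 : ℝ) 1 →
        ∀ A B : Set (EuclideanSpace ℝ (Fin d)),
          MeasurableSet A → MeasurableSet B → volume A < ∞ → volume B < ∞ →
          wLp d ((d : ℝ) / α) (Iop d α θ (A.indicator 1) (B.indicator 1)) ≤
            ENNReal.ofReal c₄ * (volume A) ^ (α / (d : ℝ)) * (volume B) ^ (α / (d : ℝ)) := by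
  set C := rieszConst (volume : Measure (EuclideanSpace ℝ (Fin d))) α * (2 ^ d) ^ (α / d)
  have hC : C ≠ ∞ := mul_ne_top (rieszConst_ne_top _ hα0 (by rwa [finrank_euclideanSpace_fin]))
    (rpow_ne_top_of_nonneg (by positivity) (by simp))
  have hC0 : C ≠ 0 := mul_ne_zero (by simp [rieszConst]) (by positivity)
  refine ⟨C.toReal, toReal_pos hC0 hC, fun θ _ A B hA hB hAfin hBfin => ?_⟩
  rw [ofReal_toReal hC]
  rcases le_total (1 / 2) θ with hθ | hθ
  · exact wLp_Iop_indicator_le_of_half_le hα0 hαd hθ hA hB hBfin.ne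
  · rw [Iop_comm, mul_right_comm]
    exact wLp_Iop_indicator_le_of_half_le hα0 hαd (by linarith) hB hA hAfin.ne
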